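/- Let S be a finite type, let R₁ : O₁ → Set (S × S) and R₂ : O₂ → Set (S × S) be domain models over S, let e : S ≃ S be a bijection, and write ê for the map (s,t) ↦ (e s, e t) on S × S. Suppose that for every operator o ∈ O₁ there exists a nonempty finite sequence seq of operators from O₂ with ê '' R₁(o) ⊆ Γ(seq), and for every operator o ∈ O₂ there exists a nonempty finite sequence seq of operators from O₁ with R₂(o) ⊆ ê '' Γ(seq). Then ê '' Γ(D₁) = Γ(D₂), i.e., under the renaming e the two domain models have equal reach sets. (Soundness of the D-VAL method, combining Theorems 1 and 2.) -/

import Mathlib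

/-!
`Γ(D)` is the least relation that contains every operator reach set and is closed under
composition. Preimages under `ê`, and images under `ê` since `e` is injective, of
composition-closed relations are again composition-closed, so each inclusion between
`ê '' Γ(D₁)` and `Γ(D₂)` reduces to covering single operators, which is the hypothesis.
-/

/-- Relational composition: `A ; B`. -/
def comp {S : Type*} (A B : Set (S × S)) : Set (S × S) :=
  {p | ∃ t, (p.1, t) ∈ A ∧ (t, p.2) ∈ B}

/-- Reach set of a nonempty finite sequence of operators, represented as
a head operator together with the list of remaining operators. -/
def seqReach {S O : Type*} (R : O → Set (S × S)) : O → List O → Set (S × S)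
  | o, [] => R o
  | o, o' :: rest => comp (R o) (seqReach R o' rest)

/-- Reach set of a domain model: union over all nonempty finite sequences of operators. -/
def domReach {S O : Type*} (R : O → Set (S × S)) : Set (S × S) :=
  ⋃ (o : O), ⋃ (l : List O), seqReach R o l

section Comp

variable {S T : Type*}

lemma comp_mono {A A' B B' : Set (S × S)} (hA : A ⊆ A') (hB : B ⊆ B') :
    comp A B ⊆ comp A' B' := by
  rintro p ⟨t, h₁, h₂⟩
  exact ⟨t, hA h₁, hB h₂⟩

lemma comp_assoc (A B C : Set (S × S)) : comp (comp A B) C = comp A (comp B C) := by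
  ext p
  constructor
  · rintro ⟨u, ⟨t, hA, hB⟩, hC⟩
    exact ⟨t, hA, u, hB, hC⟩
  · rintro ⟨t, hA, u, hB, hC⟩
    exact ⟨u, ⟨t, hA, hB⟩, hC⟩

lemma comp_preimage_prodMap_subset (f : S → T) {A : Set (T × T)} (hA : comp A A ⊆ A) :
    comp (Prod.map f f ⁻¹' A) (Prod.map f f ⁻¹' A) ⊆ Prod.map f f ⁻¹' A := by
  rintro ⟨a, b⟩ ⟨t, h₁, h₂⟩
  exact hA ⟨f t, h₁, h₂⟩

lemma comp_image_prodMap_subset {f : S → T} (hf : Function.Injective f) {A : Set (S × S)}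
    (hA : comp A A ⊆ A) :
    comp (Prod.map f f '' A) (Prod.map f f '' A) ⊆ Prod.map f f '' A := by
  rintro ⟨a, b⟩ ⟨t, ⟨⟨a', t₁⟩, h₁, hp₁⟩, ⟨⟨t₂, b'⟩, h₂, hp₂⟩⟩
  simp only [Prod.map, Prod.mk.injEq] at hp₁ hp₂
  obtain ⟨rfl, ht₁⟩ := hp₁
  obtain ⟨ht₂, rfl⟩ := hp₂
  obtain rfl : t₁ = t₂ := hf (ht₁.trans ht₂.symm)
  exact ⟨(a', b'), hA ⟨t₁, h₁, h₂⟩, rfl⟩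

end Comp

section DomReach

variable {S O : Type*} (R : O → Set (S × S))

lemma seqReach_append (l : List O) (o o' : O) (l' : List O) :
    seqReach R o (l ++ o' :: l') = comp (seqReach R o l) (seqReach R o' l') := by
  induction l generalizing o with
  | nil => rfl
  | cons a rest ih =>
    change comp (R o) (seqReach R a (rest ++ o' :: l')) = _
    rw [ih, ← comp_assoc]
    rfl

lemma seqReach_subset_domReach (o : O) (l : List O) : seqReach R o l ⊆ domReach R :=
  Set.subset_iUnion_of_subset o (Set.subset_iUnion (seqReach R o) l)

lemma comp_domReach_subset : comp (domReach R) (domReach R) ⊆ domReach R := by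
  rintro p ⟨t, h₁, h₂⟩
  simp only [domReach, Set.mem_iUnion] at h₁ h₂
  obtain ⟨o, l, h₁⟩ := h₁
  obtain ⟨o', l', h₂⟩ := h₂
  refine seqReach_subset_domReach R o (l ++ o' :: l') ?_
  rw [seqReach_append]
  exact ⟨t, h₁, h₂⟩

variable {R}

lemma domReach_subset_of_comp_subset {A : Set (S × S)} (hA : comp A A ⊆ A)
    (hR : ∀ o, R o ⊆ A) : domReach R ⊆ A := by
  suffices ∀ o l, seqReach R o l ⊆ A from Set.iUnion₂_subset this
  intro o l
  induction l generalizing o with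
  | nil => exact hR o
  | cons a rest ih => exact (comp_mono (hR o) (ih a)).trans hA

end DomReach

theorem stmt_12_general {S O₁ O₂ : Type*}
    (R₁ : O₁ → Set (S × S)) (R₂ : O₂ → Set (S × S)) (e : S ≃ S)
    (h₁ : ∀ o : O₁, ∃ (o' : O₂) (l : List O₂),
      (fun p : S × S => (e p.1, e p.2)) '' R₁ o ⊆ seqReach R₂ o' l)
    (h₂ : ∀ o : O₂, ∃ (o' : O₁) (l : List O₁),
      R₂ o ⊆ (fun p : S × S => (e p.1, e p.2)) '' seqReach R₁ o' l) :
    (fun p : S × S => (e p.1, e p.2)) '' domReach R₁ = domReach R₂ := by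
  have hmap : (fun p : S × S => (e p.1, e p.2)) = Prod.map e e := rfl
  simp only [hmap] at h₁ h₂ ⊢
  refine (Set.image_subset_iff.2 ?_).antisymm ?_
  · refine domReach_subset_of_comp_subset
      (comp_preimage_prodMap_subset e (comp_domReach_subset R₂)) fun o => ?_
    obtain ⟨o', l, h⟩ := h₁ o
    exact Set.image_subset_iff.1 (h.trans (seqReach_subset_domReach R₂ o' l))
  · refine domReach_subset_of_comp_subset
      (comp_image_prodMap_subset e.injective (comp_domReach_subset R₁)) fun o => ?_
    obtain ⟨o', l, h⟩ := h₂ o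
    exact h.trans (Set.image_mono (seqReach_subset_domReach R₁ o' l))

/-- Soundness of the D-VAL method (combining Theorems 1 and 2): if, under the state
renaming `e`, every operator of `D₁` is covered by a macro from `D₂` and conversely,
then the renamed reach set of `D₁` equals the reach set of `D₂`. -/
theorem stmt_12 {S O₁ O₂ : Type*} [Fintype S]
    (R₁ : O₁ → Set (S × S)) (R₂ : O₂ → Set (S × S)) (e : S ≃ S)
    (h₁ : ∀ o : O₁, ∃ (o' : O₂) (l : List O₂),
      (fun p : S × S => (e p.1, e p.2)) '' R₁ o ⊆ seqReach R₂ o' l)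
    (h₂ : ∀ o : O₂, ∃ (o' : O₁) (l : List O₁),
      R₂ o ⊆ (fun p : S × S => (e p.1, e p.2)) '' seqReach R₁ o' l) :
    (fun p : S × S => (e p.1, e p.2)) '' domReach R₁ = domReach R₂ :=
  stmt_12_general R₁ R₂ e h₁ h₂
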